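/- Every polynomial (B^{n1} B) ∘ … ∘ (B^{nk} B) is βη-equivalent to a decreasing polynomial (one whose sequence of degrees is weakly decreasing) of the same length k and with the same minimum degree. -/

import Mathlib

/-- Untyped lambda terms in de Bruijn representation. -/
inductive Lam where
  | var : Nat → Lam
  | app : Lam → Lam → Lam
  | lam : Lam → Lam
deriving DecidableEq

namespace Lam

/-- Lift (shift by one) all free variables with index ≥ `c`. -/
def lift (c : Nat) : Lam → Lam
  | var n => if n < c then var n else var (n + 1)
  | app a b => app (lift c a) (lift c b)
  | lam a => lam (lift (c + 1) a)

/-- Substitute `s` for the free variable with index `d`. -/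
def subst (d : Nat) (s : Lam) : Lam → Lam
  | var n => if n = d then s else if d < n then var (n - 1) else var n
  | app a b => app (subst d s a) (subst d s b)
  | lam a => lam (subst (d + 1) (lift 0 s) a)

/-- One-step βη-reduction (compatible closure of β and η). -/
inductive Step : Lam → Lam → Prop
  | beta (a b : Lam) : Step (app (lam a) b) (subst 0 b a)
  | eta (a : Lam) : Step (lam (app (lift 0 a) (var 0))) a
  | appL {a a' : Lam} (b : Lam) : Step a a' → Step (app a b) (app a' b)
  | appR (a : Lam) {b b' : Lam} : Step b b' → Step (app a b) (app a b')
  | xi {a a' : Lam} : Step a a' → Step (lam a) (lam a')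

/-- βη-equivalence: the equivalence relation generated by one-step βη-reduction. -/
def BetaEtaEq (a b : Lam) : Prop := Relation.EqvGen Step a b

/-- The B combinator λf.λg.λx. f (g x). -/
def B : Lam := lam (lam (lam (app (var 2) (app (var 1) (var 0)))))

/-- `flat X n` is the (n+1)-fold flat left application, i.e. `X_(n+1)`:
`flat X 0 = X = X_(1)` and `flat X (n+1) = (flat X n) X = X_(n+2)`. -/
def flat (X : Lam) : Nat → Lam
  | 0 => X
  | n + 1 => app (flat X n) X

end Lam

open Lam

/-- `bpow k e` is the k-fold application B (B (… (B e)…)). -/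
def bpow : ℕ → Lam → Lam
  | 0, e => e
  | k + 1, e => app B (bpow k e)

/-- Composition e1 ∘ e2 = B e1 e2. -/
def comp (a b : Lam) : Lam := app (app B a) b

/-- The polynomial (B^{n1} B) ∘ (B^{n2} B) ∘ … ∘ (B^{nk} B) of a nonempty list
of degrees [n1, …, nk]. -/
def poly : List ℕ → Lam
  | [] => B
  | [n] => bpow n B
  | n :: ns => comp (bpow n B) (poly ns)

/-!
Insertion sort on the list of degrees. The swap rule lets a degree `n` travel to the right past
every larger degree `m`, each of which becomes `m + 1`; so the length is unchanged, and so is the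
minimum, since only degrees larger than the travelling one are increased.

The swap rule itself comes from the two identities `B (X ∘ Y) = B X ∘ B Y`, iterated to
`B^m (X ∘ Y) = B^m X ∘ B^m Y`, and `B ∘ B X = B (B X) ∘ B`, each of which is checked by applying
both sides to fresh variables (η) and β-reducing with `(X ∘ Y) a = X (Y a)`.
-/

namespace Lam

theorem lift_lift (t : Lam) {i j : ℕ} (h : i ≤ j) :
    lift i (lift j t) = lift (j + 1) (lift i t) := by
  induction t generalizing i j with
  | var n => simp only [lift]; split_ifs <;> simp only [lift] <;> split_ifs <;> grind
  | app a b iha ihb => simp [lift, iha h, ihb h]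
  | lam a iha => simp [lift, iha (Nat.succ_le_succ h)]

theorem subst_lift (t s : Lam) (d : ℕ) : subst d s (lift d t) = t := by
  induction t generalizing d s with
  | var n => simp only [lift]; split_ifs <;> simp only [subst] <;> split_ifs <;> grind
  | app a b iha ihb => simp [lift, subst, iha, ihb]
  | lam a iha => simp [lift, subst, iha]

@[simp]
theorem lift_B (c : ℕ) : lift c B = B := by
  simp [B, lift]

namespace BetaEtaEq

theorem refl (a : Lam) : BetaEtaEq a a := Relation.EqvGen.refl a

theorem symm {a b : Lam} (h : BetaEtaEq a b) : BetaEtaEq b a := Relation.EqvGen.symm _ _ h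

theorem trans {a b c : Lam} (h : BetaEtaEq a b) (h' : BetaEtaEq b c) : BetaEtaEq a c :=
  Relation.EqvGen.trans _ _ _ h h'

theorem of_step {a b : Lam} (h : Step a b) : BetaEtaEq a b := Relation.EqvGen.rel _ _ h

instance : Trans BetaEtaEq BetaEtaEq BetaEtaEq := ⟨trans⟩

theorem map {f : Lam → Lam} (hf : ∀ {a b}, Step a b → Step (f a) (f b)) {a b : Lam}
    (h : BetaEtaEq a b) : BetaEtaEq (f a) (f b) := by
  induction h with
  | rel _ _ h => exact of_step (hf h)
  | refl => exact refl _
  | symm _ _ _ ih => exact ih.symm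
  | trans _ _ _ _ _ ih ih' => exact ih.trans ih'

theorem app_left {a a' : Lam} (b : Lam) (h : BetaEtaEq a a') :
    BetaEtaEq (app a b) (app a' b) :=
  map (Step.appL b) h

theorem app_right (a : Lam) {b b' : Lam} (h : BetaEtaEq b b') :
    BetaEtaEq (app a b) (app a b') :=
  map (Step.appR a) h

theorem lam {a a' : Lam} (h : BetaEtaEq a a') : BetaEtaEq (.lam a) (.lam a') :=
  map Step.xi h

theorem beta (a b : Lam) : BetaEtaEq (app (.lam a) b) (subst 0 b a) :=
  of_step (Step.beta a b)

theorem of_app_var {X Y : Lam}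
    (h : BetaEtaEq (app (lift 0 X) (var 0)) (app (lift 0 Y) (var 0))) : BetaEtaEq X Y :=
  (of_step (Step.eta X)).symm.trans ((lam h).trans (of_step (Step.eta Y)))

end BetaEtaEq

end Lam

open Lam

@[simp]
theorem lift_comp (c : ℕ) (a b : Lam) : lift c (comp a b) = comp (lift c a) (lift c b) := by
  simp [comp, lift]

@[simp]
theorem lift_bpow (c k : ℕ) (e : Lam) : lift c (bpow k e) = bpow k (lift c e) := by
  induction k with
  | zero => rfl
  | succ k ih => simp [bpow, lift, ih]

theorem comp_apply (a b c : Lam) : BetaEtaEq (app (comp a b) c) (app a (app b c)) := by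
  have hB :
      BetaEtaEq (app B a) (.lam (.lam (app (lift 0 (lift 0 a)) (app (var 1) (var 0))))) := by
    simpa [B, subst] using BetaEtaEq.beta (.lam (.lam (app (var 2) (app (var 1) (var 0))))) a
  have hBa : BetaEtaEq (app (app B a) b) (.lam (app (lift 0 a) (app (lift 0 b) (var 0)))) := by
    refine (hB.app_left b).trans ?_
    simpa [subst, lift_lift a le_rfl, subst_lift] using
      BetaEtaEq.beta (.lam (app (lift 0 (lift 0 a)) (app (var 1) (var 0)))) b
  refine (hBa.app_left c).trans ?_
  simpa [subst, subst_lift] using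
    BetaEtaEq.beta (app (lift 0 a) (app (lift 0 b) (var 0))) c

theorem comp_assoc (a b c : Lam) : BetaEtaEq (comp (comp a b) c) (comp a (comp b c)) := by
  refine .of_app_var ?_
  simp only [lift_comp]
  generalize lift 0 a = a, lift 0 b = b, lift 0 c = c
  calc BetaEtaEq _ (app a (app b (app c (var 0)))) := (comp_apply _ _ _).trans (comp_apply _ _ _)
    BetaEtaEq _ _ := ((comp_apply _ _ _).trans ((comp_apply _ _ _).app_right _)).symm

theorem app_B_comp (X Y : Lam) : BetaEtaEq (app B (comp X Y)) (comp (app B X) (app B Y)) := by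
  refine .of_app_var (.of_app_var ?_)
  simp only [lift, lift_comp, lift_B]
  generalize lift 0 (lift 0 X) = X, lift 0 (lift 0 Y) = Y
  calc BetaEtaEq _ (app X (app Y (app (var 1) (var 0)))) :=
      (comp_apply _ _ _).trans (comp_apply _ _ _)
    BetaEtaEq _ _ := (((comp_apply _ _ _).app_left _).trans
      ((comp_apply _ _ _).trans ((comp_apply _ _ _).app_right _))).symm

theorem comp_B_app_B (X : Lam) : BetaEtaEq (comp B (app B X)) (comp (app B (app B X)) B) := by
  refine .of_app_var ?_
  simp only [lift, lift_comp, lift_B]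
  generalize lift 0 X = X
  calc BetaEtaEq _ (comp (app B X) (app B (var 0))) :=
      (comp_apply _ _ _).trans (app_B_comp X (var 0))
    BetaEtaEq _ _ := (comp_apply _ _ _).symm

theorem bpow_add (a b : ℕ) (e : Lam) : bpow (a + b) e = bpow a (bpow b e) := by
  induction a with
  | zero => simp [bpow]
  | succ a ih => rw [Nat.succ_add, bpow, ih, bpow]

theorem bpow_congr (k : ℕ) {a b : Lam} (h : BetaEtaEq a b) :
    BetaEtaEq (bpow k a) (bpow k b) := by
  induction k with
  | zero => exact h
  | succ k ih => exact ih.app_right B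

theorem bpow_comp (m : ℕ) (X Y : Lam) :
    BetaEtaEq (bpow m (comp X Y)) (comp (bpow m X) (bpow m Y)) := by
  induction m with
  | zero => exact .refl _
  | succ m ih => exact (ih.app_right B).trans (app_B_comp _ _)

theorem comp_bpow_swap {m n : ℕ} (h : m < n) :
    BetaEtaEq (comp (bpow m B) (bpow n B)) (comp (bpow (n + 1) B) (bpow m B)) := by
  obtain ⟨j, rfl⟩ : ∃ j, n = m + (j + 1) := ⟨n - m - 1, by omega⟩
  rw [bpow_add m (j + 1), show m + (j + 1) + 1 = m + (j + 2) by omega, bpow_add m (j + 2)]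
  calc BetaEtaEq _ (bpow m (comp B (app B (bpow j B)))) := (bpow_comp _ _ _).symm
    BetaEtaEq _ (bpow m (comp (app B (app B (bpow j B))) B)) := bpow_congr m (comp_B_app_B _)
    BetaEtaEq _ _ := bpow_comp _ _ _

/-- Moving the new degree `n` past a larger degree `m` turns `m` into `m + 1` (the swap rule). -/
def insertDegree (n : ℕ) : List ℕ → List ℕ
  | [] => [n]
  | m :: ms => if m ≤ n then n :: m :: ms else (m + 1) :: insertDegree n ms

def sortDegrees (ns : List ℕ) : List ℕ := ns.foldr insertDegree []

theorem length_insertDegree (n : ℕ) (ms : List ℕ) :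
    (insertDegree n ms).length = ms.length + 1 := by
  induction ms with
  | nil => rfl
  | cons m ms ih => by_cases h : m ≤ n <;> simp [insertDegree, h, ih]

theorem insertDegree_ne_nil (n : ℕ) (ms : List ℕ) : insertDegree n ms ≠ [] :=
  List.ne_nil_of_length_eq_add_one (length_insertDegree n ms)

theorem head?_insertDegree_le {n b : ℕ} {ms : List ℕ} (hn : n ≤ b)
    (hms : ∀ m ∈ ms.head?, m ≤ b) : ∀ k ∈ (insertDegree n ms).head?, k ≤ b + 1 := by
  cases ms with
  | nil => simpa [insertDegree] using Nat.le_succ_of_le hn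
  | cons m ms =>
    simp only [List.head?_cons, Option.mem_some_iff, forall_eq'] at hms
    rw [insertDegree]
    split_ifs <;> simp only [List.head?_cons, Option.mem_some_iff, forall_eq'] <;> omega

theorem isChain_insertDegree (n : ℕ) {ms : List ℕ} (h : ms.IsChain (· ≥ ·)) :
    (insertDegree n ms).IsChain (· ≥ ·) := by
  induction ms with
  | nil => simp [insertDegree]
  | cons m ms ih =>
    by_cases hm : m ≤ n
    · rw [insertDegree, if_pos hm]
      exact List.isChain_cons_cons.2 ⟨hm, h⟩
    · rw [List.isChain_cons] at h
      rw [insertDegree, if_neg hm, List.isChain_cons]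
      exact ⟨head?_insertDegree_le (by omega) h.1, ih h.2⟩

theorem minimum_insertDegree (n : ℕ) (ms : List ℕ) :
    (insertDegree n ms).minimum = (n :: ms).minimum := by
  induction ms with
  | nil => rfl
  | cons m ms ih =>
    by_cases hm : m ≤ n
    · simp [insertDegree, hm]
    · simp only [insertDegree, hm, if_false, List.minimum_cons, ih]
      have h₁ : min (WithTop.some n) (WithTop.some (m + 1)) = WithTop.some n :=
        min_eq_left (WithTop.coe_le_coe.2 (by omega))
      have h₂ : min (WithTop.some n) (WithTop.some m) = WithTop.some n :=
        min_eq_left (WithTop.coe_le_coe.2 (by omega))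
      rw [min_left_comm, ← min_assoc, ← min_assoc, h₁, h₂]

theorem poly_cons {ms : List ℕ} (n : ℕ) (h : ms ≠ []) :
    poly (n :: ms) = comp (bpow n B) (poly ms) := by
  cases ms with
  | nil => contradiction
  | cons m ms => rfl

theorem poly_insertDegree (n : ℕ) (ms : List ℕ) :
    BetaEtaEq (poly (n :: ms)) (poly (insertDegree n ms)) := by
  induction ms with
  | nil => exact .refl _
  | cons m ms ih =>
    by_cases hm : m ≤ n
    · rw [insertDegree, if_pos hm]
      exact .refl _
    rw [insertDegree, if_neg hm]
    have hnm : n < m := by omega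
    rcases eq_or_ne ms [] with rfl | hms
    · exact comp_bpow_swap hnm
    rw [poly_cons n (List.cons_ne_nil _ _), poly_cons m hms,
      poly_cons _ (insertDegree_ne_nil n ms)]
    calc BetaEtaEq _ (comp (comp (bpow n B) (bpow m B)) (poly ms)) := (comp_assoc _ _ _).symm
      BetaEtaEq _ (comp (comp (bpow (m + 1) B) (bpow n B)) (poly ms)) :=
        ((comp_bpow_swap hnm).app_right B).app_left _
      BetaEtaEq _ (comp (bpow (m + 1) B) (poly (n :: ms))) := by
        rw [poly_cons n hms]; exact comp_assoc _ _ _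
      BetaEtaEq _ _ := ih.app_right _

theorem length_sortDegrees (ns : List ℕ) : (sortDegrees ns).length = ns.length := by
  induction ns with
  | nil => rfl
  | cons n ns ih => simp [sortDegrees, length_insertDegree, ← ih]

theorem sortDegrees_ne_nil {ns : List ℕ} (h : ns ≠ []) : sortDegrees ns ≠ [] := by
  obtain ⟨n, ns, rfl⟩ := List.exists_cons_of_ne_nil h
  exact insertDegree_ne_nil n _

theorem isChain_sortDegrees (ns : List ℕ) : (sortDegrees ns).IsChain (· ≥ ·) := by
  induction ns with
  | nil => exact .nil
  | cons n ns ih => exact isChain_insertDegree n ih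

theorem minimum_sortDegrees (ns : List ℕ) : (sortDegrees ns).minimum = ns.minimum := by
  induction ns with
  | nil => rfl
  | cons n ns ih =>
    rw [sortDegrees, List.foldr_cons, minimum_insertDegree, List.minimum_cons, List.minimum_cons,
      ← sortDegrees, ih]

theorem poly_sortDegrees (ns : List ℕ) : BetaEtaEq (poly ns) (poly (sortDegrees ns)) := by
  induction ns with
  | nil => exact .refl _
  | cons n ns ih =>
    rcases eq_or_ne ns [] with rfl | hns
    · exact .refl _
    calc BetaEtaEq _ (poly (n :: sortDegrees ns)) := by
          rw [poly_cons n hns, poly_cons n (sortDegrees_ne_nil hns)]; exact ih.app_right _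
      BetaEtaEq _ _ := poly_insertDegree n _

/-- Every polynomial is βη-equivalent to a decreasing polynomial of the same
length and with the same minimum degree. -/
theorem stmt18 (ns : List ℕ) (hne : ns ≠ []) :
    ∃ ms : List ℕ, ms ≠ [] ∧ ms.length = ns.length ∧
      List.Chain' (· ≥ ·) ms ∧ ms.minimum = ns.minimum ∧
      BetaEtaEq (poly ns) (poly ms) :=
  ⟨sortDegrees ns, sortDegrees_ne_nil hne, length_sortDegrees ns, isChain_sortDegrees ns,
    minimum_sortDegrees ns, poly_sortDegrees ns⟩
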